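/- For every θ ∈ (0, π/2) ∪ (3π/2, 2π) and every nonzero complex number w₂ with w₂² = d₂(θ), the matrices C₀(θ) and C₂(θ) violate Jørgensen's inequality: |trace(C₂(θ))² − 4| + |trace(C₂(θ)·C₀(θ)·C₂(θ)⁻¹·C₀(θ)⁻¹) − 2| < 1, where |·| denotes the complex absolute value. -/

import Mathlib

noncomputable section

open Matrix Complex

abbrev M2 := Matrix (Fin 2) (Fin 2) ℂ
abbrev SL2C := Matrix.SpecialLinearGroup (Fin 2) ℂ

instance : TopologicalSpace SL2C := instTopologicalSpaceSubtype

/-- The matrix `C₀(θ)`. -/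
def C0 (θ : ℝ) : M2 := (1 / 4 : ℂ) •
  !![((-Real.cos θ + 2 * Real.cos (2 * θ) + Real.cos (3 * θ) + 6 : ℝ) : ℂ) /
        ((Real.sin θ : ℂ)) ^ 2,
     4 * Complex.I * (Real.sin θ : ℂ) * (Real.cos θ : ℂ) / ((Real.cos θ : ℂ) - 1);
     2 * Complex.I * (Real.sin θ : ℂ) * (Real.cos θ : ℂ) / ((Real.sin (θ / 2) : ℂ)) ^ 2,
     4 * ((Real.cos θ : ℂ) + 1)]

/-- The unnormalized action `Â₁(θ)`. -/
def A1 (θ : ℝ) : M2 := (1 / 8 : ℂ) •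
  !![((-Real.cos θ + 2 * Real.cos (2 * θ) + Real.cos (3 * θ) + 6 : ℝ) : ℂ),
     -Complex.I * ((Real.sin θ + 2 * Real.sin (2 * θ) + Real.sin (3 * θ) : ℝ) : ℂ);
     Complex.I * ((Real.sin θ + 2 * Real.sin (2 * θ) + Real.sin (3 * θ) : ℝ) : ℂ),
     ((-7 * Real.cos θ - 2 * Real.cos (2 * θ) - Real.cos (3 * θ) + 2 : ℝ) : ℂ)]

/-- `d₁(θ) = det Â₁(θ)`. -/
def d1 (θ : ℝ) : ℂ :=
  ((5 - 28 * Real.cos θ - 4 * Real.cos (2 * θ) - 4 * Real.cos (3 * θ) -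
      Real.cos (4 * θ) : ℝ) : ℂ) / 32

/-- The normalized action `C₁(θ) = w₁⁻¹ · Â₁(θ)`. -/
def C1 (θ : ℝ) (w₁ : ℂ) : M2 := w₁⁻¹ • A1 θ

/-- The unnormalized action `Â₂(θ)`. -/
def A2 (θ : ℝ) : M2 := (1 / 8 : ℂ) •
  !![((7 * Real.cos θ - 2 * Real.cos (2 * θ) + Real.cos (3 * θ) + 2 : ℝ) : ℂ),
     -Complex.I * ((Real.sin θ - 2 * Real.sin (2 * θ) + Real.sin (3 * θ) : ℝ) : ℂ);
     -8 * Complex.I * ((Real.sin (θ / 2) ^ 2 * Real.sin θ * Real.cos θ : ℝ) : ℂ),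
     ((Real.cos θ + 2 * Real.cos (2 * θ) - Real.cos (3 * θ) + 6 : ℝ) : ℂ)]

/-- `d₂(θ) = det Â₂(θ)`. -/
def d2 (θ : ℝ) : ℂ :=
  ((5 + 28 * Real.cos θ - 4 * Real.cos (2 * θ) + 4 * Real.cos (3 * θ) -
      Real.cos (4 * θ) : ℝ) : ℂ) / 32

/-- The normalized action `C₂(θ) = w₂⁻¹ · Â₂(θ)`. -/
def C2 (θ : ℝ) (w₂ : ℂ) : M2 := w₂⁻¹ • A2 θ

/-- The unnormalized action `Â₃(θ)`, with determinant `cos θ`. -/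
def A3 (θ : ℝ) : M2 :=
  !![(((Real.cos (2 * θ) + 3) / 4 : ℝ) : ℂ),
     Complex.I * ((Real.sin (θ / 2) ^ 2 * Real.sin θ : ℝ) : ℂ);
     -Complex.I * ((Real.sin (θ / 2) ^ 2 * Real.sin θ : ℝ) : ℂ),
     (((Real.sin θ ^ 2 + 2 * Real.cos θ) / 2 : ℝ) : ℂ)]

/-- The normalized action `C₃(θ) = w₃⁻¹ · Â₃(θ)`. -/
def C3 (θ : ℝ) (w₃ : ℂ) : M2 := w₃⁻¹ • A3 θ

/-- The normalized action `C₄(θ)`. -/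
def C4 (θ : ℝ) (w₄ : ℂ) : M2 := (w₄ / 2) •
  !![-(((Real.cos (2 * θ) + 3) : ℝ) : ℂ) / (2 * (Real.cos θ : ℂ)),
     Complex.I * ((Real.sin θ + Real.tan θ : ℝ) : ℂ);
     -Complex.I * ((Real.sin θ + Real.tan θ : ℝ) : ℂ),
     (((4 * Real.cos θ + Real.cos (2 * θ) - 1) : ℝ) : ℂ) / (2 * (Real.cos θ : ℂ))]

/-!
Write `c = cos θ`. Up to the scalars `1/2` and `1/sin² θ`, the matrices `Â₂(θ)` and `C₀(θ)` have
entries polynomial in `c` and `j = i sin θ`, where `j² = c² - 1`. The commutator trace does not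
see scalar factors, and for `2 × 2` matrices Fricke's identity expresses it through traces and
determinants. With `D = (1 + c²)(1 + 2c - c²) = 4 d₂(θ)` this gives
`tr² C₂ - 4 = 4c²(1 - c)² / D` and `tr [C₂, C₀] - 2 = -4c⁴(1 - c) / ((1 + c) D)`.
On `(0, π/2) ∪ (3π/2, 2π)` we have `0 < c < 1`, where the Jørgensen sum is
`4c²(1 - c) / ((1 + c) D) < 1`.
-/

namespace Matrix

theorem trace_mul_mul_adjugate_mul_adjugate_fin_two {R : Type*} [CommRing R]
    (A B : Matrix (Fin 2) (Fin 2) R) :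
    (A * B * adjugate A * adjugate B).trace =
      A.trace ^ 2 * B.det + B.trace ^ 2 * A.det + (A * B).trace ^ 2 -
        A.trace * B.trace * (A * B).trace - 2 * A.det * B.det := by
  simp only [trace_fin_two, det_fin_two, adjugate_fin_two, mul_apply, Fin.sum_univ_two, of_apply,
    cons_val', cons_val_zero, cons_val_one, empty_val', cons_val_fin_one]
  ring

variable {K : Type*} [Field K]

theorem trace_commutator_fin_two {A B : Matrix (Fin 2) (Fin 2) K} (hA : A.det ≠ 0)
    (hB : B.det ≠ 0) :
    (A * B * A⁻¹ * B⁻¹).trace =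
      (A.trace ^ 2 * B.det + B.trace ^ 2 * A.det + (A * B).trace ^ 2 -
        A.trace * B.trace * (A * B).trace) / (A.det * B.det) - 2 := by
  simp only [inv_def, Ring.inverse_eq_inv, Matrix.mul_smul, Matrix.smul_mul, trace_smul,
    smul_eq_mul, trace_mul_mul_adjugate_mul_adjugate_fin_two]
  field_simp

theorem smul_mul_smul_mul_inv_mul_inv {n : Type*} [Fintype n] [DecidableEq n]
    {A B : Matrix n n K} (hA : A.det ≠ 0) (hB : B.det ≠ 0) {a b : K} (ha : a ≠ 0) (hb : b ≠ 0) :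
    a • A * (b • B) * (a • A)⁻¹ * (b • B)⁻¹ = A * B * A⁻¹ * B⁻¹ := by
  have := invertibleOfNonzero ha
  have := invertibleOfNonzero hb
  rw [inv_smul A a hA.isUnit, inv_smul B b hB.isUnit, invOf_eq_inv, invOf_eq_inv]
  simp only [Matrix.mul_smul, Matrix.smul_mul, smul_smul]
  convert one_smul K (A * B * A⁻¹ * B⁻¹) using 2
  field_simp

end Matrix

section PolynomialForm

variable {K : Type*} [Field K] {c j : K}

/- `c` plays the role of `cos θ` and `j` that of `i sin θ`. -/
def A2poly (c j : K) : Matrix (Fin 2) (Fin 2) K :=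
  !![c ^ 3 - c ^ 2 + c + 1, -(j * c * (c - 1)); j * c * (c - 1), -c ^ 3 + c ^ 2 + c + 1]

def C0poly (c j : K) : Matrix (Fin 2) (Fin 2) K :=
  !![c ^ 3 + c ^ 2 - c + 1, -(j * c * (1 + c)); j * c * (1 + c), (1 + c) * (1 - c ^ 2)]

theorem trace_A2poly : (A2poly c j).trace = 2 * (1 + c) := by
  rw [A2poly, trace_fin_two_of]
  ring

theorem trace_C0poly : (C0poly c j).trace = 2 := by
  rw [C0poly, trace_fin_two_of]
  ring

theorem trace_smul_A2poly_sq_sub_four [CharZero K] {w : K}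
    (hD : (1 + c ^ 2) * (1 + 2 * c - c ^ 2) ≠ 0)
    (hw : w ^ 2 = (1 + c ^ 2) * (1 + 2 * c - c ^ 2) / 4) :
    ((w⁻¹ * 2⁻¹) • A2poly c j).trace ^ 2 - 4 =
      4 * c ^ 2 * (1 - c) ^ 2 / ((1 + c ^ 2) * (1 + 2 * c - c ^ 2)) := by
  have hsq : (w⁻¹ * 2⁻¹ * (2 * (1 + c))) ^ 2 * ((1 + c ^ 2) * (1 + 2 * c - c ^ 2)) =
      4 * (1 + c) ^ 2 := by
    rw [mul_pow, mul_pow, inv_pow, hw]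
    generalize (1 + c ^ 2) * (1 + 2 * c - c ^ 2) = D at hD ⊢
    field_simp
  rw [trace_smul, trace_A2poly, smul_eq_mul, eq_div_iff hD]
  linear_combination hsq

variable (hj : j ^ 2 = c ^ 2 - 1)
include hj

theorem det_A2poly : (A2poly c j).det = (1 + c ^ 2) * (1 + 2 * c - c ^ 2) := by
  rw [A2poly, det_fin_two_of]
  linear_combination c ^ 2 * (c - 1) ^ 2 * hj

theorem det_C0poly : (C0poly c j).det = (1 - c ^ 2) ^ 2 := by
  rw [C0poly, det_fin_two_of]
  linear_combination c ^ 2 * (1 + c) ^ 2 * hj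

theorem trace_A2poly_mul_C0poly :
    (A2poly c j * C0poly c j).trace = 2 * (1 + c - c ^ 2 + c ^ 3) := by
  rw [A2poly, C0poly, mul_fin_two, trace_fin_two_of]
  linear_combination -2 * c ^ 2 * (c - 1) * (1 + c) * hj

theorem trace_commutator_smul_A2poly_smul_C0poly {a b : K} (ha : a ≠ 0) (hb : b ≠ 0)
    (hD : (1 + c ^ 2) * (1 + 2 * c - c ^ 2) ≠ 0) (he : 1 - c ^ 2 ≠ 0) :
    (a • A2poly c j * (b • C0poly c j) * (a • A2poly c j)⁻¹ * (b • C0poly c j)⁻¹).trace =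
      2 - 4 * c ^ 4 * (1 - c) / ((1 + c) * ((1 + c ^ 2) * (1 + 2 * c - c ^ 2))) := by
  have hA : (A2poly c j).det ≠ 0 := by rwa [det_A2poly hj]
  have hB : (C0poly c j).det ≠ 0 := by rw [det_C0poly hj]; exact pow_ne_zero 2 he
  rw [Matrix.smul_mul_smul_mul_inv_mul_inv hA hB ha hb, Matrix.trace_commutator_fin_two hA hB,
    trace_A2poly, trace_C0poly, trace_A2poly_mul_C0poly hj, det_A2poly hj, det_C0poly hj]
  have h1 := left_ne_zero_of_mul hD
  have h2 := right_ne_zero_of_mul hD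
  have hc : 1 + c ≠ 0 := fun h => he (by linear_combination (1 - c) * h)
  field_simp
  ring

end PolynomialForm

theorem Complex.sin_sq_half (x : ℂ) : sin (x / 2) ^ 2 = (1 - cos x) / 2 := by
  have h := cos_two_mul_eq_one_sub (x / 2)
  rw [mul_div_cancel₀ x two_ne_zero] at h
  linear_combination h / 2

theorem A2_eq_smul_A2poly (θ : ℝ) :
    A2 θ = (2 : ℂ)⁻¹ • A2poly (Real.cos θ : ℂ) (I * Real.sin θ) := by
  ext i k
  fin_cases i <;> fin_cases k <;>
    simp [A2, A2poly, cos_two_mul, cos_three_mul, sin_two_mul, sin_three_mul, sin_sq_half]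
  · ring
  · linear_combination -2⁻¹ * I * sin θ * sin_sq (θ : ℂ)
  · ring
  · ring

theorem C0_eq_smul_C0poly {θ : ℝ} (hs : Real.sin θ ≠ 0) :
    C0 θ = (1 - (Real.cos θ : ℂ) ^ 2)⁻¹ • C0poly (Real.cos θ : ℂ) (I * Real.sin θ) := by
  have hsin : sin (θ : ℂ) ≠ 0 := by exact_mod_cast hs
  have he : 1 - cos (θ : ℂ) ^ 2 ≠ 0 := by rwa [← sin_sq, pow_ne_zero_iff two_ne_zero]
  have hm : 1 - cos (θ : ℂ) ≠ 0 := fun h => he (by linear_combination (1 + cos (θ : ℂ)) * h)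
  have hp : 1 + cos (θ : ℂ) ≠ 0 := fun h => he (by linear_combination (1 - cos (θ : ℂ)) * h)
  have hm' : cos (θ : ℂ) - 1 ≠ 0 := fun h => hm (by linear_combination -h)
  ext i k
  fin_cases i <;> fin_cases k <;>
    simp [C0, C0poly, cos_two_mul, cos_three_mul, sin_sq (θ : ℂ), sin_sq_half] <;>
    field_simp <;> ring

theorem d2_eq_cos (θ : ℝ) :
    d2 θ = (1 + (Real.cos θ : ℂ) ^ 2) * (1 + 2 * Real.cos θ - (Real.cos θ : ℂ) ^ 2) / 4 := by
  have h4 : (4 : ℂ) * θ = 2 * (2 * θ) := by ring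
  simp only [d2, ofReal_sub, ofReal_add, ofReal_mul, ofReal_ofNat, ofReal_cos, h4, cos_two_mul,
    cos_three_mul]
  ring

theorem cos_mem_Ioo_zero_one {θ : ℝ}
    (hθ : θ ∈ Set.Ioo 0 (Real.pi / 2) ∪ Set.Ioo (3 * Real.pi / 2) (2 * Real.pi)) :
    Real.cos θ ∈ Set.Ioo 0 1 := by
  have hπ := Real.pi_pos
  have hpos : 0 < Real.cos θ := by
    rcases hθ with h | h
    · exact Real.cos_pos_of_mem_Ioo ⟨by linarith [h.1], h.2⟩
    · rw [← Real.cos_sub_two_pi]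
      exact Real.cos_pos_of_mem_Ioo ⟨by linarith [h.1], by linarith [h.2]⟩
  have hne : Real.cos θ ≠ 1 := by
    rw [Ne, Real.cos_eq_one_iff_of_lt_of_lt] <;> rcases hθ with h | h <;> linarith [h.1, h.2]
  exact ⟨hpos, (Real.cos_le_one θ).lt_of_ne hne⟩

theorem one_add_sq_mul_pos {c : ℝ} (h0 : 0 ≤ c) (h2 : c ≤ 2) :
    0 < (1 + c ^ 2) * (1 + 2 * c - c ^ 2) :=
  mul_pos (by positivity) (by nlinarith)

theorem jorgensen_sum_lt_one {c : ℝ} (h0 : 0 < c) (h1 : c < 1) :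
    |4 * c ^ 2 * (1 - c) ^ 2 / ((1 + c ^ 2) * (1 + 2 * c - c ^ 2))| +
      |-(4 * c ^ 4 * (1 - c) / ((1 + c) * ((1 + c ^ 2) * (1 + 2 * c - c ^ 2))))| < 1 := by
  have hD := one_add_sq_mul_pos h0.le (by linarith)
  have h1' := sub_pos.2 h1
  rw [abs_neg, abs_of_nonneg (by positivity), abs_of_nonneg (by positivity)]
  have hsum : 4 * c ^ 2 * (1 - c) ^ 2 / ((1 + c ^ 2) * (1 + 2 * c - c ^ 2)) +
      4 * c ^ 4 * (1 - c) / ((1 + c) * ((1 + c ^ 2) * (1 + 2 * c - c ^ 2))) =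
      4 * c ^ 2 * (1 - c) / ((1 + c) * ((1 + c ^ 2) * (1 + 2 * c - c ^ 2))) := by
    field_simp
    ring
  rw [hsum, div_lt_one (by positivity)]
  nlinarith [sq_nonneg (2 * c - 1), mul_pos h0 h1', mul_pos (pow_pos h0 4) h1']

theorem stmt14 (θ : ℝ)
    (hθ : θ ∈ Set.Ioo 0 (Real.pi / 2) ∪ Set.Ioo (3 * Real.pi / 2) (2 * Real.pi))
    (w₂ : ℂ) (hw₂ : w₂ ≠ 0) (h2 : w₂ ^ 2 = d2 θ) :
    ‖(C2 θ w₂).trace ^ 2 - 4‖ +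
      ‖(C2 θ w₂ * C0 θ * (C2 θ w₂)⁻¹ * (C0 θ)⁻¹).trace - 2‖ < 1 := by
  obtain ⟨hc0, hc1⟩ := cos_mem_Ioo_zero_one hθ
  have hsin : Real.sin θ ≠ 0 := by
    rw [Ne, Real.sin_eq_zero_iff_cos_eq]
    rintro (h | h) <;> linarith
  have hj : (I * Real.sin θ) ^ 2 = (Real.cos θ : ℂ) ^ 2 - 1 := by
    rw [mul_pow, I_sq, ← ofReal_pow, Real.sin_sq]
    push_cast
    ring
  rw [d2_eq_cos] at h2
  rw [C2, A2_eq_smul_A2poly, C0_eq_smul_C0poly hsin, smul_smul]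
  generalize I * (Real.sin θ : ℂ) = j at *
  generalize Real.cos θ = c at *
  have hD : (1 + (c : ℂ) ^ 2) * (1 + 2 * c - (c : ℂ) ^ 2) ≠ 0 := by
    exact_mod_cast (one_add_sq_mul_pos hc0.le (by linarith)).ne'
  have he : 1 - (c : ℂ) ^ 2 ≠ 0 := by exact_mod_cast (by nlinarith : 1 - c ^ 2 ≠ 0)
  rw [trace_smul_A2poly_sq_sub_four hD h2, trace_commutator_smul_A2poly_smul_C0poly hj
    (by simpa using hw₂) (inv_ne_zero he) hD he]
  rw [sub_sub_cancel_left]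
  have key := jorgensen_sum_lt_one hc0 hc1
  rw [← Real.norm_eq_abs, ← Real.norm_eq_abs, ← norm_real, ← norm_real] at key
  exact_mod_cast key
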